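/- For any subset X of ℚ and any subset F ⊆ X such that F is infinite and F has no isolated points in X, there exists a function f : X → X with f(f(x)) = x for all x ∈ X whose set of discontinuity points (in the subspace topology from ℝ) is exactly F. -/

import Mathlib

/-!
Enumerate `F` and match its points greedily: at step `n`, if the `n`-th point is still free,
match it with a free point that is almost as close to it as any other free point. In a metric in
which `F` is totally bounded only finitely many matched pairs are `ε`-far apart: of two initiators
of such pairs lying `ε / 2`-close, the later one was still free when the earlier one chose, so the
earlier one found a partner within about `ε / 2`. On `ℝ` such a metric is pulled back along an
order isomorphism `ℝ ≃ (-1, 1)`. The resulting involution `g` of `ℝ`, the identity off `F`,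
satisfies `g y → z` as `y → z`, `y ≠ z`; restricted to `X` it is therefore continuous exactly at its
fixed points, since every point of `F` is an accumulation point of `X`.
-/

open Filter Function Set Topology Equiv

lemma TotallyBounded.exists_lt_dist_lt {M : Type*} [PseudoMetricSpace M] {x : ℕ → M}
    (hx : TotallyBounded (range x)) {S : Set ℕ} (hS : S.Infinite) {ε : ℝ} (hε : 0 < ε) :
    ∃ m ∈ S, ∃ n ∈ S, m < n ∧ dist (x m) (x n) < ε := by
  obtain ⟨t, ht, hcover⟩ := Metric.totallyBounded_iff.1 hx (ε / 2) (half_pos hε)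
  have hcenter : ∀ n, ∃ c ∈ t, dist (x n) c < ε / 2 := fun n => by
    simpa using hcover (mem_range_self n)
  choose c hct hc using hcenter
  obtain ⟨m, hm, n, hn, hmn, hcmn⟩ := hS.exists_ne_map_eq_of_mapsTo (fun n _ => hct n) ht
  have hdist : dist (x m) (x n) < ε := by
    linarith [dist_triangle_right (x m) (x n) (c m), hc m, hcmn ▸ hc n]
  rcases hmn.lt_or_gt with h | h
  exacts [⟨m, hm, n, hn, h, hdist⟩, ⟨n, hn, m, hm, h, dist_comm (x m) (x n) ▸ hdist⟩]

lemma tendsto_cofinite_zero_of_finite_setOf_le {ι : Type*} {f : ι → ℝ} (hf : ∀ i, 0 ≤ f i)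
    (h : ∀ ε > 0, {i | ε ≤ f i}.Finite) : Tendsto f cofinite (𝓝 0) :=
  tendsto_order.2 ⟨fun _ ha => Eventually.of_forall fun i => ha.trans_le (hf i),
    fun ε hε => eventually_cofinite.2 (by simpa only [not_lt] using h ε hε)⟩

lemma Equiv.Perm.swap_mul_apply_of_ne {α : Type*} [DecidableEq α] {s : Perm α}
    (hs : Involutive s) {a b i : α} (ha : s a = a) (hb : s b = b) (hi : s i ≠ i) :
    (swap a b * s) i = s i := by
  have hne : ∀ c, s c = c → s i ≠ c := fun c hc h => hi (by rw [h, ← hs i, h, hc])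
  exact swap_apply_of_ne_of_ne (hne a ha) (hne b hb)

namespace GreedyMatching

variable {M : Type*} [PseudoMetricSpace M] (x : ℕ → M)

def IsGoodPartner (s : Perm ℕ) (n w : ℕ) : Prop :=
  s n = n ∧ w ≠ n ∧ s w = w ∧
    ∀ v, v ≠ n → s v = v → dist (x n) (x w) < dist (x n) (x v) + 1 / (n + 1)

-- A partial matching is stored as an involution whose fixed points are the unmatched indices.
def IsPartialMatching (s : Perm ℕ) : Prop :=
  Involutive s ∧ {i | s i ≠ i}.Finite

lemma IsPartialMatching.exists_isGoodPartner {s : Perm ℕ} (hs : IsPartialMatching s) {n : ℕ}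
    (hn : s n = n) : ∃ w, IsGoodPartner x s n w := by
  set U := {v | v ≠ n ∧ s v = v}
  have hU : U.Nonempty := by
    refine ((hs.2.union (finite_singleton n)).infinite_compl.mono ?_).nonempty
    intro v hv
    simp only [mem_compl_iff, mem_union, mem_ofPred_eq, mem_singleton_iff, not_or, not_not] at hv
    exact ⟨hv.2, hv.1⟩
  have hlt : Metric.infDist (x n) (x '' U) < Metric.infDist (x n) (x '' U) + 1 / (n + 1) :=
    lt_add_of_pos_right _ Nat.one_div_pos_of_nat
  obtain ⟨_, ⟨w, ⟨hwn, hw⟩, rfl⟩, hdist⟩ := (Metric.infDist_lt_iff (hU.image x)).1 hlt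
  refine ⟨w, hn, hwn, hw, fun v hvn hv => hdist.trans_le ?_⟩
  gcongr
  exact Metric.infDist_le_dist_of_mem (mem_image_of_mem x ⟨hvn, hv⟩)

variable {x}

lemma IsPartialMatching.swap_mul {s : Perm ℕ} (hs : IsPartialMatching s) {n w : ℕ}
    (hw : IsGoodPartner x s n w) : IsPartialMatching (swap n w * s) := by
  obtain ⟨hn, -, hw, -⟩ := hw
  have hfix : ∀ i, s i = i → (swap n w * s) i = swap n w i := fun i hi => by
    rw [Perm.mul_apply, hi]
  refine ⟨fun i => ?_, (hs.2.insert n |>.insert w).subset fun i hi => ?_⟩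
  · by_cases hi : s i = i
    · rw [hfix i hi, hfix _ ?_, swap_apply_self]
      rcases eq_or_ne i n with rfl | hin
      · rwa [swap_apply_left]
      rcases eq_or_ne i w with rfl | hiw
      · rwa [swap_apply_right]
      · rwa [swap_apply_of_ne_of_ne hin hiw]
    · have hsi : s (s i) ≠ s i := by rw [hs.1 i]; exact Ne.symm hi
      rw [Perm.swap_mul_apply_of_ne hs.1 hn hw hi, Perm.swap_mul_apply_of_ne hs.1 hn hw hsi, hs.1 i]
  · by_contra h
    simp only [mem_insert_iff, mem_ofPred_eq, not_or, not_not] at h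
    obtain ⟨hiw, hin, hsi⟩ := h
    exact hi (by rw [hfix i hsi, swap_apply_of_ne_of_ne hin hiw])

variable (x)

open Classical in
noncomputable def step (n : ℕ) (s : Perm ℕ) : Perm ℕ :=
  if h : ∃ w, IsGoodPartner x s n w then swap n h.choose * s else s

noncomputable def stage : ℕ → Perm ℕ
  | 0 => 1
  | n + 1 => step x n (stage n)

noncomputable def partner (n : ℕ) : ℕ := stage x (n + 1) n

lemma step_eq_or (n : ℕ) (s : Perm ℕ) :
    step x n s = s ∨ ∃ w, IsGoodPartner x s n w ∧ step x n s = swap n w * s := by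
  unfold step
  split_ifs with h
  · exact Or.inr ⟨h.choose, h.choose_spec, rfl⟩
  · exact Or.inl rfl

variable {x}

lemma step_eq_of_exists {n : ℕ} {s : Perm ℕ} (h : ∃ w, IsGoodPartner x s n w) :
    ∃ w, IsGoodPartner x s n w ∧ step x n s = swap n w * s := by
  rw [step, dif_pos h]
  exact ⟨h.choose, h.choose_spec, rfl⟩

lemma IsPartialMatching.step {s : Perm ℕ} (hs : IsPartialMatching s) (n : ℕ) :
    IsPartialMatching (step x n s) := by
  rcases step_eq_or x n s with h | ⟨w, hw, h⟩ <;> rw [h]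
  exacts [hs, hs.swap_mul hw]

lemma isPartialMatching_stage (n : ℕ) : IsPartialMatching (stage x n) := by
  induction n with
  | zero => exact ⟨fun _ => rfl, by simp [stage]⟩
  | succ n ih => exact ih.step n

lemma step_apply_of_ne {s : Perm ℕ} (hs : Involutive s) {n i : ℕ} (hi : s i ≠ i) :
    step x n s i = s i := by
  rcases step_eq_or x n s with h | ⟨w, ⟨hn, -, hw, -⟩, h⟩ <;> rw [h]
  exact Perm.swap_mul_apply_of_ne hs hn hw hi

lemma stage_apply_of_le {m k i : ℕ} (hmk : m ≤ k) (hi : stage x m i ≠ i) :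
    stage x k i = stage x m i := by
  induction k, hmk using Nat.le_induction with
  | base => rfl
  | succ k _ ih =>
    rw [stage, step_apply_of_ne (isPartialMatching_stage k).1 (ih ▸ hi), ih]

variable (x) in
lemma stage_succ_self_ne (n : ℕ) : stage x (n + 1) n ≠ n := by
  by_cases hn : stage x n n = n
  · obtain ⟨w, ⟨-, hwn, -, -⟩, h⟩ :=
      step_eq_of_exists ((isPartialMatching_stage n).exists_isGoodPartner x hn)
    rwa [stage, h, Perm.mul_apply, hn, swap_apply_left]
  · rwa [stage, step_apply_of_ne (isPartialMatching_stage n).1 hn]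

lemma stage_apply_eq_partner {n k : ℕ} (hnk : n < k) : stage x k n = partner x n :=
  stage_apply_of_le hnk (stage_succ_self_ne x n)

lemma partner_ne (n : ℕ) : partner x n ≠ n := stage_succ_self_ne x n

lemma involutive_partner : Involutive (partner x) := fun n => by
  set k := max (n + 1) (partner x n + 1)
  rw [← stage_apply_eq_partner (k := k) (by omega), ← stage_apply_eq_partner (k := k) (by omega)]
  exact (isPartialMatching_stage k).1 n

lemma dist_partner_lt {n v : ℕ} (hn : stage x n n = n) (hvn : v ≠ n) (hv : stage x n v = v) :
    dist (x n) (x (partner x n)) < dist (x n) (x v) + 1 / (n + 1) := by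
  obtain ⟨w, ⟨-, -, -, hw⟩, h⟩ :=
    step_eq_of_exists ((isPartialMatching_stage n).exists_isGoodPartner x hn)
  have : partner x n = w := by
    rw [partner, stage, h, Perm.mul_apply, hn, swap_apply_left]
  exact this ▸ hw v hvn hv

lemma exists_eq_or_partner_eq_of_stage_apply_ne {k i : ℕ} (hi : stage x k i ≠ i) :
    ∃ m < k, stage x m m = m ∧ (m = i ∨ partner x m = i) := by
  induction k with
  | zero => exact absurd rfl hi
  | succ k ih =>
    by_cases hk : stage x k i = i
    · refine ⟨k, k.lt_succ_self, ?_⟩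
      rcases step_eq_or x k (stage x k) with h | ⟨w, ⟨hkk, -, -, -⟩, h⟩
      · rw [stage, h] at hi
        exact absurd hk hi
      have hpk : partner x k = w := by
        rw [partner, stage, h, Perm.mul_apply, hkk, swap_apply_left]
      rw [stage, h, Perm.mul_apply, hk] at hi
      refine ⟨hkk, ?_⟩
      by_contra hki
      rw [not_or] at hki
      exact hi (swap_apply_of_ne_of_ne (Ne.symm hki.1) (hpk ▸ Ne.symm hki.2))
    · obtain ⟨m, hm, hmi⟩ := ih hk
      exact ⟨m, hm.trans k.lt_succ_self, hmi⟩

lemma finite_setOf_le_dist_partner (hx : TotallyBounded (range x)) {ε : ℝ} (hε : 0 < ε) :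
    {n | ε ≤ dist (x (partner x n)) (x n)}.Finite := by
  obtain ⟨N, hN⟩ := exists_nat_one_div_lt (half_pos hε)
  set S := {n | ε ≤ dist (x (partner x n)) (x n)}
  set A := {n | stage x n n = n}
  have hfin : (S ∩ A ∩ Ici N).Finite := by
    by_contra hinf
    obtain ⟨m, ⟨⟨hmS, hmA⟩, hmN⟩, n, ⟨⟨-, hnA⟩, -⟩, hmn, hd⟩ :=
      hx.exists_lt_dist_lt hinf (half_pos hε)
    have hn : stage x m n = n := by
      by_contra h
      exact h (by rw [← stage_apply_of_le hmn.le h]; exact hnA)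
    have hpartner := dist_partner_lt hmA hmn.ne' hn
    have hmN' : 1 / ((m : ℝ) + 1) ≤ 1 / ((N : ℝ) + 1) := Nat.one_div_le_one_div hmN
    have hmS' : ε ≤ dist (x m) (x (partner x m)) := dist_comm (x m) _ ▸ hmS
    linarith
  set B := S ∩ A ∩ Ici N ∪ Iio N
  have hB : B.Finite := hfin.union (finite_Iio N)
  refine (hB.union (hB.image (partner x))).subset fun i hi => ?_
  have hN_split : ∀ m ∈ S ∩ A, m ∈ B := fun m hm => (le_or_gt N m).imp (fun h => ⟨hm, h⟩) id
  obtain ⟨m, -, hmA, rfl | rfl⟩ :=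
    exists_eq_or_partner_eq_of_stage_apply_ne (stage_succ_self_ne x i)
  · exact Or.inl (hN_split m ⟨hi, hmA⟩)
  · refine Or.inr ⟨m, hN_split m ⟨?_, hmA⟩, rfl⟩
    simpa only [S, mem_ofPred_eq, involutive_partner m, dist_comm] using hi

end GreedyMatching

theorem exists_involutive_tendsto_dist_nat {M : Type*} [PseudoMetricSpace M] {x : ℕ → M}
    (hx : TotallyBounded (range x)) :
    ∃ π : ℕ → ℕ, Involutive π ∧ (∀ n, π n ≠ n) ∧
      Tendsto (fun n => dist (x (π n)) (x n)) cofinite (𝓝 0) :=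
  ⟨GreedyMatching.partner x, GreedyMatching.involutive_partner, GreedyMatching.partner_ne,
    tendsto_cofinite_zero_of_finite_setOf_le (fun _ => dist_nonneg)
      fun _ hε => GreedyMatching.finite_setOf_le_dist_partner hx hε⟩

theorem exists_involutive_tendsto_dist {ι M : Type*} [Countable ι] [Infinite ι]
    [PseudoMetricSpace M] {x : ι → M} (hx : TotallyBounded (range x)) :
    ∃ π : ι → ι, Involutive π ∧ (∀ i, π i ≠ i) ∧
      Tendsto (fun i => dist (x (π i)) (x i)) cofinite (𝓝 0) := by
  obtain ⟨_⟩ := nonempty_denumerable ι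
  set e := Denumerable.eqv ι
  obtain ⟨π, hπ, hne, hlim⟩ :=
    exists_involutive_tendsto_dist_nat (x := x ∘ e.symm) (by rwa [e.symm.surjective.range_comp])
  refine ⟨e.symm ∘ π ∘ e, fun i => by simp [hπ (e i)], fun i h => hne (e i) ?_, ?_⟩
  · exact e.symm_apply_eq.1 h
  · simpa [comp_def] using hlim.comp e.injective.tendsto_cofinite

theorem exists_involutive_tendsto_nhdsNE {T M : Type*} [TopologicalSpace T] [T1Space T]
    [PseudoMetricSpace M] {h : T → M} (hh : IsInducing h) {F : Set T} (hFc : F.Countable)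
    (hFi : F.Infinite) (hFb : TotallyBounded (h '' F)) :
    ∃ g : T → T, Involutive g ∧ (∀ y, g y ≠ y ↔ y ∈ F) ∧ ∀ z, Tendsto g (𝓝[≠] z) (𝓝 z) := by
  have := hFc.to_subtype
  have := hFi.to_subtype
  obtain ⟨π, hπ, hne, hlim⟩ := exists_involutive_tendsto_dist (x := fun y : F => h y)
    (by rwa [range_comp' h, Subtype.range_coe])
  classical
  set g : T → T := fun y => if hy : y ∈ F then π ⟨y, hy⟩ else y
  have hgF : ∀ y : F, g y = π y := fun y => dif_pos y.2
  have hgFc : ∀ y ∉ F, g y = y := fun y hy => dif_neg hy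
  refine ⟨g, fun y => ?_, fun y => ?_, fun z => ?_⟩
  · by_cases hy : y ∈ F
    · rw [hgF ⟨y, hy⟩, hgF, hπ]
    · rw [hgFc y hy, hgFc y hy]
  · by_cases hy : y ∈ F
    · simpa [hgF ⟨y, hy⟩, hy] using Subtype.coe_injective.ne (hne ⟨y, hy⟩)
    · simp [hgFc y hy, hy]
  have hdisp : Tendsto (fun y => dist (h y) (h (g y))) cofinite (𝓝 0) := by
    refine tendsto_cofinite_zero_of_finite_setOf_le (fun _ => dist_nonneg) fun ε hε => ?_
    have hbad : {i : F | ε ≤ dist (h (π i)) (h i)}.Finite := by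
      simpa only [not_lt] using eventually_cofinite.1 (hlim.eventually (gt_mem_nhds hε))
    refine (hbad.image (↑)).subset fun y hy => ?_
    by_cases hyF : y ∈ F
    · exact ⟨⟨y, hyF⟩, by simpa [dist_comm, hgF ⟨y, hyF⟩] using hy, rfl⟩
    · exact absurd hε (not_lt.2 (by simpa [hgFc y hyF] using hy))
  rw [hh.tendsto_nhds_iff]
  exact ((hh.continuous.tendsto z).mono_left nhdsWithin_le_nhds).congr_dist
    (hdisp.mono_left (nhdsNE_le_cofinite z))

theorem Real.exists_involutive_tendsto_nhdsNE {F : Set ℝ} (hFc : F.Countable)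
    (hFi : F.Infinite) :
    ∃ g : ℝ → ℝ, Involutive g ∧ (∀ y, g y ≠ y ↔ y ∈ F) ∧ ∀ z, Tendsto g (𝓝[≠] z) (𝓝 z) :=
  _root_.exists_involutive_tendsto_nhdsNE
    (IsInducing.subtypeVal.comp (orderIsoIooNegOneOne ℝ).toHomeomorph.isInducing) hFc hFi
    (by
      refine (isCompact_Icc (a := (-1 : ℝ)) (b := 1)).totallyBounded.subset ?_
      rintro _ ⟨y, -, rfl⟩
      exact Ioo_subset_Icc_self (orderIsoIooNegOneOne ℝ y).2)

lemma eq_of_continuousWithinAt_of_tendsto_nhdsNE {T : Type*} [TopologicalSpace T] [T2Space T]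
    {g : T → T} {X : Set T} {x : T} (hx : AccPt x (𝓟 X)) (hg : Tendsto g (𝓝[≠] x) (𝓝 x))
    (hc : ContinuousWithinAt g X x) : g x = x :=
  have : (𝓝[≠] x ⊓ 𝓟 X).NeBot := hx
  tendsto_nhds_unique (hc.mono_left (inf_le_inf_right _ nhdsWithin_le_nhds))
    (hg.mono_left inf_le_left)

lemma Set.MapsTo.continuousAt_restrict_iff {α β : Type*} [TopologicalSpace α]
    [TopologicalSpace β] {f : α → β} {s : Set α} {t : Set β} (h : MapsTo f s t) (x : s) :
    ContinuousAt (h.restrict f s t) x ↔ ContinuousWithinAt f s x :=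
  ((continuousWithinAt_iff_continuousAt_domRestrict f x.2).trans
    (continuousAt_codRestrict_iff _).symm).symm

theorem stmt_1 (X F : Set ℝ)
    (hX : X ⊆ Set.range ((↑) : ℚ → ℝ)) (hFX : F ⊆ X)
    (hinf : F.Infinite)
    (hni : ∀ x ∈ F, AccPt x (Filter.principal X)) :
    ∃ f : X → X, (∀ x, f (f x) = x) ∧
      {x : X | ¬ ContinuousAt f x} = {x : X | (x : ℝ) ∈ F} := by
  obtain ⟨g, hg, hfix, hlim⟩ :=
    Real.exists_involutive_tendsto_nhdsNE ((countable_range _).mono (hFX.trans hX)) hinf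
  have hmaps : MapsTo g X X := fun y hy => by
    by_cases hyF : y ∈ F
    · refine hFX ((hfix (g y)).1 ?_)
      rw [hg y]
      exact fun h => (hfix y).2 hyF h.symm
    · rwa [not_not.1 (mt (hfix y).1 hyF)]
  refine ⟨hmaps.restrict g X X, fun y => Subtype.ext (hg y), ?_⟩
  ext y
  rw [mem_ofPred_eq, mem_ofPred_eq, hmaps.continuousAt_restrict_iff, ← hfix]
  refine ⟨fun hc hfixed => hc ?_, fun hne hc => hne ?_⟩
  · have hcont : ContinuousAt g y := by
      rw [← continuousWithinAt_compl_self, ContinuousWithinAt, hfixed]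
      exact hlim y
    exact hcont.continuousWithinAt
  · exact eq_of_continuousWithinAt_of_tendsto_nhdsNE (hni y ((hfix y).1 hne)) (hlim y) hc
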